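/- Let 0 < p_m ≤ p_c and let p_b° = sqrt( p_c·Σ_{i∈I} k1^i / Σ_{i∈I}(q·F^i·η^i + 1/b1^i) ). Then the unique maximizer p_b^⋄ of the anticipated profit L̃ over the interval [p_m, p_c] is given by the clamped value: p_b^⋄ = p_c if p_b° ≥ p_c, p_b^⋄ = p_m if p_b° ≤ p_m, and p_b^⋄ = p_b° if p_m < p_b° < p_c. -/

import Mathlib

/-
Up to an additive constant, the profit is `-(A p + B / p)` with `A = ∑ (q Fⁱ ηⁱ + 1/b1ⁱ) > 0` and
`B = p_c ∑ k1ⁱ`. The map `p ↦ A p + B / p` is strictly decreasing on `(0, √(B/A)]` and strictly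
increasing on `[√(B/A), ∞) ∩ (0, ∞)`, because `(A y + B/y) - (A x + B/x) = (y - x)(A - B/(x y))`.
A function that is strictly decreasing up to `s` and strictly increasing from `s` on `[m, M]` has
the clamp `max m (min M s)` of `s` as its unique minimizer there, and `p_b^⋄` is that clamp.
-/

open Real Set

noncomputable def apgProfit {ι : Type*} (I : Finset ι) (q : ℝ) (F η k1 b1 : ι → ℝ)
    (p_s p_c R : ℝ) (p : ℝ) : ℝ :=
  (p_c - p) * ∑ i ∈ I, (q * F i * η i - (k1 i / p - 1 / b1 i)) + (p_s - p_c) * R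

noncomputable def pbOpt {ι : Type*} (I : Finset ι) (q : ℝ) (F η k1 b1 : ι → ℝ)
    (p_c : ℝ) : ℝ :=
  Real.sqrt (p_c * (∑ i ∈ I, k1 i) / ∑ i ∈ I, (q * F i * η i + 1 / b1 i))

noncomputable def pbClamp {ι : Type*} (I : Finset ι) (q : ℝ) (F η k1 b1 : ι → ℝ)
    (p_m p_c : ℝ) : ℝ :=
  if p_c ≤ pbOpt I q F η k1 b1 p_c then p_c
  else if pbOpt I q F η k1 b1 p_c ≤ p_m then p_m
  else pbOpt I q F η k1 b1 p_c

theorem lt_of_ne_max_min_of_strictAntiOn_of_strictMonoOn {f : ℝ → ℝ} {m M s p : ℝ}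
    (hanti : StrictAntiOn f (Icc m M ∩ Iic s)) (hmono : StrictMonoOn f (Icc m M ∩ Ici s))
    (hmM : m ≤ M) (hp : p ∈ Icc m M) (hne : p ≠ max m (min M s)) :
    f (max m (min M s)) < f p := by
  set c := max m (min M s)
  have hc : c ∈ Icc m M := ⟨le_max_left _ _, max_le hmM (min_le_left _ _)⟩
  rcases hne.lt_or_gt with hpc | hcp
  · have hcs : c ≤ s := by
      by_contra! hsc
      exact (max_lt (hp.1.trans_lt hpc) ((min_le_right M s).trans_lt hsc)).false
    exact hanti ⟨hp, hpc.le.trans hcs⟩ ⟨hc, hcs⟩ hpc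
  · have hsc : s ≤ c := by
      by_contra! hcs
      exact (lt_min (hcp.trans_le hp.2) hcs).not_ge (le_max_right m _)
    exact hmono ⟨hc, hsc⟩ ⟨hp, hsc.trans hcp.le⟩ hcp

theorem mul_add_div_sub_mul_add_div (a b : ℝ) {x y : ℝ} (hx : x ≠ 0) (hy : y ≠ 0) :
    (a * y + b / y) - (a * x + b / x) = (y - x) * (a - b / (x * y)) := by
  field_simp
  ring

theorem strictAntiOn_mul_add_div {a : ℝ} (b : ℝ) (ha : 0 < a) :
    StrictAntiOn (fun p ↦ a * p + b / p) (Ioi 0 ∩ Iic √(b / a)) := by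
  rintro x ⟨hx : 0 < x, -⟩ y ⟨hy : 0 < y, hys : y ≤ √(b / a)⟩ hxy
  rw [← sub_neg, mul_add_div_sub_mul_add_div a b hx.ne' hy.ne']
  refine mul_neg_of_pos_of_neg (sub_pos.mpr hxy) (sub_neg.mpr ?_)
  rw [lt_div_iff₀ (mul_pos hx hy)]
  have hy2 : y ^ 2 * a ≤ b := (le_div_iff₀ ha).mp ((Real.le_sqrt' hy).mp hys)
  nlinarith [mul_lt_mul_of_pos_left hxy (mul_pos ha hy)]

theorem strictMonoOn_mul_add_div {a : ℝ} (b : ℝ) (ha : 0 < a) :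
    StrictMonoOn (fun p ↦ a * p + b / p) (Ioi 0 ∩ Ici √(b / a)) := by
  rintro x ⟨hx : 0 < x, hxs : √(b / a) ≤ x⟩ y ⟨hy : 0 < y, -⟩ hxy
  rw [← sub_pos, mul_add_div_sub_mul_add_div a b hx.ne' hy.ne']
  refine mul_pos (sub_pos.mpr hxy) (sub_pos.mpr ?_)
  rw [div_lt_iff₀ (mul_pos hx hy)]
  have hx2 : b ≤ x ^ 2 * a := (div_le_iff₀ ha).mp ((Real.sqrt_le_left hx.le).mp hxs)
  nlinarith [mul_lt_mul_of_pos_left hxy (mul_pos ha hx)]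

theorem mul_add_div_lt_of_ne_max_min {a b m M p : ℝ} (ha : 0 < a) (hm : 0 < m) (hmM : m ≤ M)
    (hp : p ∈ Icc m M) (hne : p ≠ max m (min M √(b / a))) :
    a * max m (min M √(b / a)) + b / max m (min M √(b / a)) < a * p + b / p := by
  have hpos : Icc m M ⊆ Ioi 0 := fun x hx ↦ hm.trans_le hx.1
  exact lt_of_ne_max_min_of_strictAntiOn_of_strictMonoOn
    ((strictAntiOn_mul_add_div b ha).mono (inter_subset_inter_left _ hpos))
    ((strictMonoOn_mul_add_div b ha).mono (inter_subset_inter_left _ hpos)) hmM hp hne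

section Profit

variable {ι : Type*} (I : Finset ι) (q : ℝ) (F η k1 b1 : ι → ℝ)

theorem apgProfit_eq (p_s p_c R : ℝ) {p : ℝ} (hp : p ≠ 0) :
    apgProfit I q F η k1 b1 p_s p_c R p =
      p_c * ∑ i ∈ I, (q * F i * η i + 1 / b1 i) + ∑ i ∈ I, k1 i + (p_s - p_c) * R -
        ((∑ i ∈ I, (q * F i * η i + 1 / b1 i)) * p + p_c * (∑ i ∈ I, k1 i) / p) := by
  have hsum : ∑ i ∈ I, (q * F i * η i - (k1 i / p - 1 / b1 i)) =
      ∑ i ∈ I, (q * F i * η i + 1 / b1 i) - (∑ i ∈ I, k1 i) / p := by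
    rw [Finset.sum_div, ← Finset.sum_sub_distrib]
    exact Finset.sum_congr rfl fun i _ ↦ by ring
  rw [apgProfit, hsum]
  field_simp
  ring

theorem pbClamp_eq_max_min {p_m p_c : ℝ} (hmc : p_m ≤ p_c) :
    pbClamp I q F η k1 b1 p_m p_c = max p_m (min p_c (pbOpt I q F η k1 b1 p_c)) := by
  unfold pbClamp
  split_ifs with hc hm
  · rw [min_eq_left hc, max_eq_right hmc]
  · rw [min_eq_right (hm.trans hmc), max_eq_left hm]
  · rw [min_eq_right (not_le.mp hc).le, max_eq_right (not_le.mp hm).le]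

end Profit

theorem stmt_8_general {ι : Type*} (I : Finset ι) (hI : I.Nonempty)
    (q : ℝ) (hq : 0 < q) (F η k1 b1 : ι → ℝ)
    (hF : ∀ i ∈ I, 0 < F i) (hη : ∀ i ∈ I, 0 < η i)
    (hb1 : ∀ i ∈ I, 0 < b1 i)
    (p_m p_c : ℝ) (hpm : 0 < p_m) (hmc : p_m ≤ p_c) (p_s R : ℝ) :
    pbClamp I q F η k1 b1 p_m p_c ∈ Icc p_m p_c ∧
    ∀ p ∈ Icc p_m p_c,
      apgProfit I q F η k1 b1 p_s p_c R p
        ≤ apgProfit I q F η k1 b1 p_s p_c R (pbClamp I q F η k1 b1 p_m p_c) ∧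
      (apgProfit I q F η k1 b1 p_s p_c R p
        = apgProfit I q F η k1 b1 p_s p_c R (pbClamp I q F η k1 b1 p_m p_c) →
        p = pbClamp I q F η k1 b1 p_m p_c) := by
  have hA : 0 < ∑ i ∈ I, (q * F i * η i + 1 / b1 i) := Finset.sum_pos (fun i hi ↦ by
    have := hF i hi; have := hη i hi; have := hb1 i hi; positivity) hI
  rw [pbClamp_eq_max_min I q F η k1 b1 hmc]
  set c := max p_m (min p_c (pbOpt I q F η k1 b1 p_c))
  have hc : c ∈ Icc p_m p_c := ⟨le_max_left _ _, max_le hmc (min_le_left _ _)⟩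
  refine ⟨hc, fun p hp ↦ ?_⟩
  have hlt : p ≠ c → apgProfit I q F η k1 b1 p_s p_c R p < apgProfit I q F η k1 b1 p_s p_c R c :=
    fun hne ↦ by
      rw [apgProfit_eq I q F η k1 b1 p_s p_c R (hpm.trans_le hp.1).ne',
        apgProfit_eq I q F η k1 b1 p_s p_c R (hpm.trans_le hc.1).ne']
      have key : _ * c + _ / c < _ := mul_add_div_lt_of_ne_max_min hA hpm hmc hp hne
      linarith
  rcases eq_or_ne p c with rfl | hne
  · exact ⟨le_rfl, fun _ ↦ rfl⟩
  · exact ⟨(hlt hne).le, fun h ↦ absurd h (hlt hne).ne⟩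

/-- For `0 < p_m ≤ p_c`, the clamped value `p_b^⋄` (equal to `p_c` if `p_b° ≥ p_c`,
to `p_m` if `p_b° ≤ p_m`, and to `p_b°` otherwise) is the unique maximizer of the
anticipated profit `L̃` over `[p_m, p_c]`. -/
theorem stmt_8 {ι : Type*} (I : Finset ι) (hI : I.Nonempty)
    (q : ℝ) (hq : 0 < q) (F η k1 b1 : ι → ℝ)
    (hF : ∀ i ∈ I, 0 < F i) (hη : ∀ i ∈ I, 0 < η i)
    (hk1 : ∀ i ∈ I, 0 < k1 i) (hb1 : ∀ i ∈ I, 0 < b1 i)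
    (p_m p_c : ℝ) (hpm : 0 < p_m) (hmc : p_m ≤ p_c) (p_s R : ℝ) :
    pbClamp I q F η k1 b1 p_m p_c ∈ Icc p_m p_c ∧
    ∀ p ∈ Icc p_m p_c,
      apgProfit I q F η k1 b1 p_s p_c R p
        ≤ apgProfit I q F η k1 b1 p_s p_c R (pbClamp I q F η k1 b1 p_m p_c) ∧
      (apgProfit I q F η k1 b1 p_s p_c R p
        = apgProfit I q F η k1 b1 p_s p_c R (pbClamp I q F η k1 b1 p_m p_c) →
        p = pbClamp I q F η k1 b1 p_m p_c) :=
  stmt_8_general I hI q hq F η k1 b1 hF hη hb1 p_m p_c hpm hmc p_s R
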